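/- There exist a similarity S and a language model M such that M is PDFA S-recognizable but not S-regular: concretely, over Σ = {a}, with S the variation-distance similarity with threshold 0.15, the model M that outputs (a↦0.4, $↦0.6) on aⁿ for n in a set N₁ with strictly increasing gaps and (a↦0.6, $↦0.4) otherwise, is S-similar to the one-state PDFA always outputting (a↦0.5, $↦0.5), yet admits no finite (S,M)-clique congruence. -/

import Mathlib

/-- A probability distribution over `Option α` (the alphabet `α` extended with
the terminal symbol `$`, modeled as `none`). -/
def PDist (α : Type*) [Fintype α] : Type _ :=
  {f : Option α → ℝ // (∀ x, 0 ≤ f x) ∧ ∑ x, f x = 1}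

/-- A probabilistic deterministic finite automaton with state space `Q`. -/
structure PDFA (Q : Type*) (α : Type*) [Fintype α] where
  init : Q
  out : Q → PDist α
  next : Q → α → Q

variable {Q α : Type*} [Fintype α]

/-- Extension of the transition function to strings. -/
def PDFA.run (A : PDFA Q α) (q : Q) (u : List α) : Q := u.foldl A.next q

/-- The language model defined by a PDFA. -/
def PDFA.lm (A : PDFA Q α) (u : List α) : PDist α := A.out (A.run A.init u)

/-- The tolerance/congruence induced on strings by a language model `M` and a
relation `S` on distributions. -/
def strTol (M : List α → PDist α) (S : PDist α → PDist α → Prop) (u u' : List α) : Prop :=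
  ∀ w : List α, S (M (u ++ w)) (M (u' ++ w))

/-- The tolerance/congruence induced on states of a PDFA. -/
def stateTol (A : PDFA Q α) (S : PDist α → PDist α → Prop) (q q' : Q) : Prop :=
  ∀ w : List α, S (A.out (A.run q w)) (A.out (A.run q' w))

open scoped Classical

/-- The distribution over `{a, $}` giving probability `p` to the letter `a` and
`1-p` to the terminal symbol `$`. -/
noncomputable def twoDist (p : ℝ) (h0 : 0 ≤ p) (h1 : p ≤ 1) : PDist Unit :=
  ⟨fun x => Option.rec (1 - p) (fun _ => p) x, by
    constructor
    · intro x; cases x <;> simp <;> linarith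
    · rw [Fintype.sum_option]; simp⟩

/-- Variation-distance similarity with threshold `t`. -/
def vdSim {α : Type*} [Fintype α] (t : ℝ) (δ δ' : PDist α) : Prop :=
  ∀ x : Option α, |δ.1 x - δ'.1 x| ≤ t

/-- The language model over the one-letter alphabet that outputs
`(a ↦ 0.4, $ ↦ 0.6)` on `aᵐ` for `m ∈ range n` and `(a ↦ 0.6, $ ↦ 0.4)`
otherwise. -/
noncomputable def Mex (n : ℕ → ℕ) : List Unit → PDist Unit := fun u =>
  if u.length ∈ Set.range n then twoDist 0.4 (by norm_num) (by norm_num)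
  else twoDist 0.6 (by norm_num) (by norm_num)

/-- The one-state PDFA always outputting `(a ↦ 0.5, $ ↦ 0.5)`. -/
noncomputable def oneStatePDFA : PDFA Unit Unit where
  init := ()
  out := fun _ => twoDist 0.5 (by norm_num) (by norm_num)
  next := fun q _ => q

/-- An `(S, M)`-clique congruence: a partition of `Σ*` into cliques of the
tolerance induced by `M` and `S`, compatible with appending symbols. -/
def IsCliqueCongruence {α : Type*} [Fintype α] (M : List α → PDist α)
    (S : PDist α → PDist α → Prop) (C : Set (Set (List α))) : Prop :=
  (∀ u : List α, ∃ c ∈ C, u ∈ c) ∧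
  (∀ c ∈ C, ∀ c' ∈ C, c ≠ c' → Disjoint c c') ∧
  (∀ c ∈ C, ∀ u ∈ c, ∀ v ∈ c, strTol M S u v) ∧
  (∀ c ∈ C, ∀ u ∈ c, ∀ v ∈ c, ∀ a : α, ∃ c' ∈ C, u ++ [a] ∈ c' ∧ v ++ [a] ∈ c')

lemma Mex_apply (n : ℕ → ℕ) (u : List Unit) :
    (Mex n u).1 (some ()) = if u.length ∈ Set.range n then (0.4:ℝ) else 0.6 := by
  unfold Mex twoDist
  by_cases h : u.length ∈ Set.range n <;> simp only [h, ↓reduceIte] <;> rfl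

lemma not_in_range (n : ℕ → ℕ) (hmono : StrictMono n)
    (hgap : StrictMono fun k => n (k + 1) - n k) {k l : ℕ} (hkl : k < l) :
    n l + (n (k + 1) - n k) ∉ Set.range n := by
  rintro ⟨j, hj⟩
  have h1 : n k < n (k + 1) := hmono (lt_add_one k)
  have h2 : n (k + 1) - n k < n (l + 1) - n l := hgap hkl
  have h3 : n l < n (l + 1) := hmono (lt_add_one l)
  have hlt : n l < n j := by omega
  have hlt2 : n j < n (l + 1) := by omega
  have e1 : l < j := hmono.lt_iff_lt.mp hlt
  have e2 : j < l + 1 := hmono.lt_iff_lt.mp hlt2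
  omega

lemma not_tol (n : ℕ → ℕ) (hmono : StrictMono n)
    (hgap : StrictMono fun k => n (k + 1) - n k) {k l : ℕ} (hkl : k < l) :
    ¬ strTol (Mex n) (vdSim 0.15)
      (List.replicate (n k) ()) (List.replicate (n l) ()) := by
  intro h
  have hk1 : n k < n (k + 1) := hmono (lt_add_one k)
  have H := h (List.replicate (n (k + 1) - n k) ()) (some ())
  rw [Mex_apply, Mex_apply] at H
  simp only [List.length_append, List.length_replicate] at H
  have h1 : n k + (n (k + 1) - n k) = n (k + 1) := by omega
  rw [h1, if_pos ⟨k + 1, rfl⟩,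
    if_neg (not_in_range n hmono hgap hkl)] at H
  rw [abs_le] at H
  norm_num at H

/-- Prop. 30 (paper): for `N₁` with strictly increasing gaps, the model `Mex n`
is PDFA `S`-recognizable for `S = (vd, 0.15)` — indeed it is `S`-similar to the
one-state PDFA always outputting `(0.5, 0.5)` — yet it is not `S`-regular:
it admits no finite `(S, Mex n)`-clique congruence. -/
theorem recognizable_not_regular (n : ℕ → ℕ) (hmono : StrictMono n)
    (hgap : StrictMono fun k => n (k + 1) - n k) :
    (∀ u, vdSim 0.15 (Mex n u) (oneStatePDFA.lm u)) ∧
    (∃ (Q : Type) (_ : Fintype Q) (A : PDFA Q Unit),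
      ∀ u, vdSim 0.15 (Mex n u) (A.lm u)) ∧
    ¬ ∃ C : Set (Set (List Unit)), C.Finite ∧
        IsCliqueCongruence (Mex n) (vdSim 0.15) C := by
  refine ⟨?_, ?_, ?_⟩
  · intro u x
    show |(Mex n u).1 x - (oneStatePDFA.lm u).1 x| ≤ 0.15
    unfold Mex oneStatePDFA PDFA.lm twoDist
    by_cases h : u.length ∈ Set.range n <;> simp only [h, ↓reduceIte] <;> cases x <;> simp <;> norm_num [abs_le]
  · refine ⟨Unit, inferInstance, oneStatePDFA, ?_⟩
    intro u x
    show |(Mex n u).1 x - (oneStatePDFA.lm u).1 x| ≤ 0.15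
    unfold Mex oneStatePDFA PDFA.lm twoDist
    by_cases h : u.length ∈ Set.range n <;> simp only [h, ↓reduceIte] <;> cases x <;> simp <;> norm_num [abs_le]
  · rintro ⟨C, hCfin, hcover, -, hclique, -⟩
    choose f hfC hfmem using fun k => hcover (List.replicate (n k) ())
    obtain ⟨k, -, l, -, hne, heq⟩ :=
      Set.infinite_univ.exists_ne_map_eq_of_mapsTo
        (f := f) (fun k _ => hfC k) hCfin
    have htol := hclique (f k) (hfC k) _ (hfmem k) _ (heq ▸ hfmem l)
    rcases hne.lt_or_gt with hkl | hlk
    · exact not_tol n hmono hgap hkl htol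
    · exact not_tol n hmono hgap hlk fun w x => by
        have := htol w x; rw [abs_sub_comm] at this; exact this
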